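/- In the setting of the previous statement, if all eigenvalues λ_i are positive, then f(t) → Y as t → ∞. -/

import Mathlib

/-!
Pairing with the eigenvectors diagonalizes the flow: each coefficient
`c i t = (f t - Y) ⬝ᵥ q i` satisfies `c i' = -lam i * c i`, hence `c i t = c i 0 * exp (-lam i * t)`,
which tends to `0` because `lam i > 0`. Since the `q i` form an orthonormal basis,
`f t - Y = ∑ i, c i t • q i → 0`.
-/

open Matrix Filter Topology

section Orthonormal

variable {R ι κ : Type*} [CommSemiring R] [Fintype ι] [Fintype κ] [DecidableEq κ]
  {q : κ → ι → R}

theorem sum_smul_dotProduct_of_orthonormal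
    (horth : ∀ i j, q i ⬝ᵥ q j = if i = j then 1 else 0) (a : κ → R) (i : κ) :
    (∑ j, a j • q j) ⬝ᵥ q i = a i := by
  simp [sum_dotProduct, smul_dotProduct, horth]

theorem eq_sum_dotProduct_smul_of_orthonormal
    (horth : ∀ i j, q i ⬝ᵥ q j = if i = j then 1 else 0) {x : ι → R}
    (hx : x ∈ Submodule.span R (Set.range q)) :
    x = ∑ i, (x ⬝ᵥ q i) • q i := by
  obtain ⟨a, rfl⟩ := (Submodule.mem_span_range_iff_exists_fun R).1 hx
  simp only [sum_smul_dotProduct_of_orthonormal horth]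

theorem mulVec_dotProduct_of_orthonormal_eigenvectors
    {K : Matrix ι ι R} {lam : κ → R}
    (horth : ∀ i j, q i ⬝ᵥ q j = if i = j then 1 else 0)
    (heig : ∀ i, K *ᵥ q i = lam i • q i) {x : ι → R}
    (hx : x ∈ Submodule.span R (Set.range q)) (i : κ) :
    K *ᵥ x ⬝ᵥ q i = lam i * (x ⬝ᵥ q i) := by
  obtain ⟨a, rfl⟩ := (Submodule.mem_span_range_iff_exists_fun R).1 hx
  have hKx : K *ᵥ ∑ j, a j • q j = ∑ j, (lam j * a j) • q j := by
    simp only [mulVec_sum, mulVec_smul, heig, smul_smul, mul_comm]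
  rw [hKx, sum_smul_dotProduct_of_orthonormal horth, sum_smul_dotProduct_of_orthonormal horth]

end Orthonormal

theorem HasDerivAt.dotProduct_const {ι : Type*} [Fintype ι] {g : ℝ → ι → ℝ} {g' : ι → ℝ}
    {t : ℝ} (hg : HasDerivAt g g' t) (v : ι → ℝ) :
    HasDerivAt (fun s => g s ⬝ᵥ v) (g' ⬝ᵥ v) t :=
  HasDerivAt.fun_sum fun j _ => (hasDerivAt_pi.1 hg j).mul_const (v j)

theorem eq_mul_exp_of_hasDerivAt_neg_mul {c : ℝ → ℝ} {μ : ℝ}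
    (hc : ∀ t, HasDerivAt c (-(μ * c t)) t) (t : ℝ) :
    c t = c 0 * Real.exp (-(μ * t)) := by
  have hderiv : ∀ s, HasDerivAt (fun s => Real.exp (μ * s) * c s) 0 s := fun s =>
    (((hasDerivAt_id s).const_mul μ).exp.fun_mul (hc s)).congr_deriv (by ring)
  have := is_const_of_deriv_eq_zero (fun s => (hderiv s).differentiableAt)
    (fun s => (hderiv s).deriv) t 0
  simp only [mul_zero, Real.exp_zero, one_mul] at this
  rw [← this, Real.exp_neg]
  field_simp

theorem tendsto_sum_mul_exp_neg_smul_atTop_zero {ι E : Type*} [Fintype ι]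
    [NormedAddCommGroup E] [NormedSpace ℝ E] {μ : ι → ℝ} (hμ : ∀ i, 0 < μ i)
    (a : ι → ℝ) (v : ι → E) :
    Tendsto (fun t => ∑ i, (a i * Real.exp (-(μ i * t))) • v i) atTop (𝓝 0) := by
  rw [← Finset.sum_const_zero]
  refine tendsto_finsetSum _ fun i _ => ?_
  have hexp : Tendsto (fun t => Real.exp (-(μ i * t))) atTop (𝓝 0) :=
    Real.tendsto_exp_neg_atTop_nhds_zero.comp (tendsto_id.const_mul_atTop (hμ i))
  simpa using (hexp.const_mul (a i)).smul_const (v i)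

theorem ntk_convergence_of_pos_eigenvalues_general (n : ℕ) (K : Matrix (Fin n) (Fin n) ℝ)
    (q : Fin n → Fin n → ℝ) (lam : Fin n → ℝ)
    (horth : ∀ i j, dotProduct (q i) (q j) = if i = j then 1 else 0)
    (heig : ∀ i, K.mulVec (q i) = lam i • q i)
    (hbasis : ∀ x : Fin n → ℝ, x ∈ Submodule.span ℝ (Set.range q))
    (hpos : ∀ i, 0 < lam i)
    (Y : Fin n → ℝ) (f : ℝ → Fin n → ℝ)
    (hf : ∀ t : ℝ, HasDerivAt f (-(K.mulVec (f t - Y))) t) :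
    Filter.Tendsto f Filter.atTop (nhds Y) := by
  set g : ℝ → Fin n → ℝ := fun t => f t - Y
  have hg : ∀ t, HasDerivAt g (-(K *ᵥ g t)) t := fun t => (hf t).sub_const Y
  have hcoeff : ∀ i t, g t ⬝ᵥ q i = (g 0 ⬝ᵥ q i) * Real.exp (-(lam i * t)) := fun i =>
    eq_mul_exp_of_hasDerivAt_neg_mul fun t => by
      simpa [mulVec_dotProduct_of_orthonormal_eigenvectors horth heig (hbasis _)] using
        (hg t).dotProduct_const (q i)
  have hg_eq : g = fun t => ∑ i, ((g 0 ⬝ᵥ q i) * Real.exp (-(lam i * t))) • q i := by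
    funext t
    rw [eq_sum_dotProduct_smul_of_orthonormal horth (hbasis (g t))]
    exact Finset.sum_congr rfl fun i _ => by rw [hcoeff i t]
  have hg_lim : Tendsto g atTop (𝓝 0) := by
    rw [hg_eq]
    exact tendsto_sum_mul_exp_neg_smul_atTop_zero hpos _ q
  simpa [g] using hg_lim.add_const Y

theorem ntk_convergence_of_pos_eigenvalues (n : ℕ) (K : Matrix (Fin n) (Fin n) ℝ)
    (hK : K.IsSymm) (q : Fin n → Fin n → ℝ) (lam : Fin n → ℝ)
    (horth : ∀ i j, dotProduct (q i) (q j) = if i = j then 1 else 0)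
    (heig : ∀ i, K.mulVec (q i) = lam i • q i)
    (hbasis : ∀ x : Fin n → ℝ, x ∈ Submodule.span ℝ (Set.range q))
    (hpos : ∀ i, 0 < lam i)
    (Y f₀ : Fin n → ℝ) (f : ℝ → Fin n → ℝ)
    (hf : ∀ t : ℝ, HasDerivAt f (-(K.mulVec (f t - Y))) t) (hf0 : f 0 = f₀) :
    Filter.Tendsto f Filter.atTop (nhds Y) :=
  ntk_convergence_of_pos_eigenvalues_general n K q lam horth heig hbasis hpos Y f hf
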